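/- arXiv:0807.0087 — 4 statements merged into one kernel-verified Lean document; each statement's English description precedes it below -/
import Mathlib

section
/- Let u be a proper strict ancestor of a node v in a directed acyclic graph N (i.e., u ≠ v, v is a descendant of u, and every path from a root of N to v contains u). If w is an intermediate node in some path from u to v, then u is also a strict ancestor of w (every path from a root of N to w contains u). -/
open Classical

/-- A walk (path) in a digraph: a nonempty list of vertices with consecutive arcs. -/
def IsWalk {V : Type} (E : V → V → Prop) (p : List V) : Prop := p ≠ [] ∧ p.Chain' E

/-- A path with origin `u` and end `v`. -/
def WalkFromTo {V : Type} (E : V → V → Prop) (u v : V) (p : List V) : Prop :=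
  IsWalk E p ∧ p.head? = some u ∧ p.getLast? = some v

/-- `v` is a descendant of `u` (possibly trivial path from `u` to `v`). -/
def Desc {V : Type} (E : V → V → Prop) (u v : V) : Prop := Relation.ReflTransGen E u v

/-- A root: a node with no incoming arcs. -/
def IsRootNode {V : Type} (E : V → V → Prop) (r : V) : Prop := ∀ u, ¬ E u r

/-- `u` is a strict ancestor of `v`: `v` is a descendant of `u` and every path
from a root to `v` contains `u`. -/
def StrictAnc {V : Type} (E : V → V → Prop) (u v : V) : Prop :=
  Desc E u v ∧ ∀ (r : V) (p : List V), IsRootNode E r → WalkFromTo E r v p → u ∈ p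

/-- In-degree. -/
noncomputable def indeg {V : Type} (E : V → V → Prop) (v : V) : ℕ := {u | E u v}.ncard
/-- Out-degree. -/
noncomputable def outdeg {V : Type} (E : V → V → Prop) (v : V) : ℕ := {w | E v w}.ncard

/-- Tree node: in-degree at most 1. -/
def IsTreeNode {V : Type} (E : V → V → Prop) (v : V) : Prop := indeg E v ≤ 1
/-- Hybrid node: in-degree at least 2. -/
def IsHybrid {V : Type} (E : V → V → Prop) (v : V) : Prop := 2 ≤ indeg E v
/-- Leaf: no outgoing arcs. -/
def IsLeaf {V : Type} (E : V → V → Prop) (v : V) : Prop := ∀ w, ¬ E v w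

/-- Acyclicity: no non-trivial path from a node to itself. -/
def Acyclic {V : Type} (E : V → V → Prop) : Prop := ∀ v, ¬ Relation.TransGen E v v

/-- A hybridization network: a rooted DAG whose single root has out-degree > 1. -/
structure IsHybNet {V : Type} (E : V → V → Prop) (r : V) : Prop where
  acyclic : Acyclic E
  isRoot : IsRootNode E r
  uniqueRoot : ∀ x, IsRootNode E x → x = r
  rootOut : 2 ≤ outdeg E r

/-- Tree-child condition: every internal node has a tree-node child. -/
def TreeChild {V : Type} (E : V → V → Prop) : Prop :=
  ∀ v, ¬ IsLeaf E v → ∃ w, E v w ∧ IsTreeNode E w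

/-- Time consistency: a temporal representation exists. -/
def TimeConsistent {V : Type} (E : V → V → Prop) : Prop :=
  ∃ τ : V → ℕ, ∀ u v, E u v → (IsTreeNode E v → τ u < τ v) ∧ (IsHybrid E v → τ u = τ v)

/-- The leaves are bijectively labeled by `S` via `leaf`. -/
def LabelsLeaves {V S : Type} (E : V → V → Prop) (leaf : S → V) : Prop :=
  Function.Injective leaf ∧ (∀ s, IsLeaf E (leaf s)) ∧ ∀ v, IsLeaf E v → ∃ s, leaf s = v

/-- Distance: length of a shortest path from `u` to `v`. -/
noncomputable def dist {V : Type} (E : V → V → Prop) (u v : V) : ℕ :=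
  sInf {n | ∃ p, WalkFromTo E u v p ∧ p.length = n + 1}

/-- Height: largest length of a path from `v` to a leaf. -/
noncomputable def height {V : Type} (E : V → V → Prop) (v : V) : ℕ :=
  sSup {n | ∃ p w, WalkFromTo E v w p ∧ IsLeaf E w ∧ p.length = n + 1}

/-- Common ancestors of `u` and `v` that are strict ancestors of at least one of them. -/
def CSAset {V : Type} (E : V → V → Prop) (u v : V) : Set V :=
  {x | Desc E x u ∧ Desc E x v ∧ (StrictAnc E x u ∨ StrictAnc E x v)}

/-- `x` is a least common semi-strict ancestor of `u` and `v`. -/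
def IsLCSA {V : Type} (E : V → V → Prop) (u v x : V) : Prop :=
  x ∈ CSAset E u v ∧ ∀ y ∈ CSAset E u v, height E x ≤ height E y

/-- The least common semi-strict ancestor `[u,v]` (the root `r` witnesses nonemptiness). -/
noncomputable def lcsa {V : Type} (E : V → V → Prop) (r u v : V) : V :=
  @Classical.epsilon V ⟨r⟩ (IsLCSA E u v)

/-- `ℓ_N(u,v)`: the distance from `[u,v]` to `u`. -/
noncomputable def ell {V : Type} (E : V → V → Prop) (r u v : V) : ℕ :=
  dist E (lcsa E r u v) u

/-- `L_N(u,v) = ℓ_N(u,v) + ℓ_N(v,u)`: the LCSA-path length between `u` and `v`. -/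
noncomputable def pathLen {V : Type} (E : V → V → Prop) (r u v : V) : ℕ :=
  ell E r u v + ell E r v u

/-- `h_N(u,v)`: −1 if `[u,v]` is a strict ancestor of `u` only, 1 if of `v` only, 0 if of both. -/
noncomputable def hval {V : Type} (E : V → V → Prop) (r u v : V) : ℤ :=
  if StrictAnc E (lcsa E r u v) u then
    (if StrictAnc E (lcsa E r u v) v then 0 else -1)
  else 1

/-- Siblings: distinct nodes sharing a parent. -/
def Sibling {V : Type} (E : V → V → Prop) (u v : V) : Prop :=
  u ≠ v ∧ ∃ p, E p u ∧ E p v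

/-- A tree path: a non-trivial path whose end and intermediate nodes are tree nodes. -/
def TreePath {V : Type} (E : V → V → Prop) (p : List V) (u v : V) : Prop :=
  WalkFromTo E u v p ∧ 2 ≤ p.length ∧ ∀ w ∈ p.tail, IsTreeNode E w

/-- `v` is a tree descendant of `u`. -/
def TreeDesc {V : Type} (E : V → V → Prop) (u v : V) : Prop := ∃ p, TreePath E p u v

/-- Quasi-binary hybridization network. -/
def QuasiBinary {V : Type} (E : V → V → Prop) : Prop :=
  ∀ v : V, (indeg E v, outdeg E v) ∈ ({(0,2),(1,0),(1,2),(2,0),(2,1),(2,2)} : Set (ℕ × ℕ))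

/-- Fully resolved hybridization network node types. -/
def FullyResolvedHyb {V : Type} (E : V → V → Prop) : Prop :=
  ∀ v : V, (indeg E v, outdeg E v) ∈ ({(0,2),(1,0),(1,2),(2,0),(2,2)} : Set (ℕ × ℕ))

/-- Fully resolved phylogenetic network node types. -/
def FullyResolvedPhylo {V : Type} (E : V → V → Prop) : Prop :=
  ∀ v : V, (indeg E v, outdeg E v) ∈ ({(0,2),(1,0),(1,2),(2,1)} : Set (ℕ × ℕ))

/-- Phylogenetic network condition: every hybrid node has exactly one child, a tree node. -/
def PhyloNet {V : Type} (E : V → V → Prop) : Prop :=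
  ∀ v, IsHybrid E v → ∃ w, E v w ∧ IsTreeNode E w ∧ ∀ x, E v x → x = w

/-! In a DAG no walk leaving a proper descendant `w` of `u` can return to `u`. So if some root
path `q` to `w` avoided `u`, then `q` followed by the tail of the given path from `w` to `v`
would be a root path to `v` avoiding `u`. -/

namespace WalkFromTo

variable {V : Type} {E : V → V → Prop} {a b w : V} {p : List V}

theorem isChain (h : WalkFromTo E a b p) : p.IsChain E := h.1.2

theorem reflTransGen (h : WalkFromTo E a b p) : Relation.ReflTransGen E a b := by
  have hchain := h.isChain
  obtain ⟨⟨hne, -⟩, hhead, hlast⟩ := h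
  rw [← (List.head_eq_iff_head?_eq_some hne).mpr hhead, ← List.getLast_of_mem_getLast? hlast]
  exact List.relationReflTransGen_of_exists_isChain p hchain hne

theorem transGen (h : WalkFromTo E a b p) (hab : a ≠ b) : Relation.TransGen E a b :=
  (Relation.reflTransGen_iff_eq_or_transGen.mp h.reflTransGen).resolve_left hab.symm

theorem exists_split (h : WalkFromTo E a b p) (hw : w ∈ p) :
    ∃ p₁ p₂, p = p₁ ++ w :: p₂ ∧ WalkFromTo E a w (p₁ ++ [w]) ∧ WalkFromTo E w b (w :: p₂) := by
  obtain ⟨p₁, p₂, rfl⟩ := List.append_of_mem hw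
  have hchain := h.isChain
  obtain ⟨-, hhead, hlast⟩ := h
  refine ⟨p₁, p₂, rfl, ⟨⟨by simp, ?_⟩, ?_, by simp⟩, ⟨⟨by simp, hchain.right_of_append⟩, rfl, ?_⟩⟩
  · exact (by simpa using hchain : (p₁ ++ [w] ++ p₂).IsChain E).left_of_append
  · cases p₁ <;> simp_all
  · rw [← hlast, List.getLast?_append_of_ne_nil _ (List.cons_ne_nil w p₂)]

theorem append (h₁ : WalkFromTo E a w p) {p₂ : List V} (h₂ : WalkFromTo E w b (w :: p₂)) :
    WalkFromTo E a b (p ++ p₂) := by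
  have hchain₁ := h₁.isChain
  have hchain₂ := h₂.isChain
  obtain ⟨⟨hne, -⟩, hhead, hlast₁⟩ := h₁
  obtain ⟨-, -, hlast₂⟩ := h₂
  refine ⟨⟨by simp [hne], hchain₁.append hchain₂.tail ?_⟩, ?_, ?_⟩
  · rw [hlast₁]
    rintro x hx y hy
    obtain rfl := Option.mem_some_iff.mp hx
    exact hchain₂.rel_head? hy
  · cases p <;> simp_all
  · cases p₂ with
    | nil => simpa [hlast₁] using hlast₂
    | cons c p₂ => rwa [List.getLast?_append_of_ne_nil _ (List.cons_ne_nil c p₂)]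

end WalkFromTo

theorem Acyclic.not_mem_of_walkFromTo {V : Type} {E : V → V → Prop} (hacyc : Acyclic E)
    {u w b : V} {q : List V} (huw : Relation.TransGen E u w) (hq : WalkFromTo E w b q) :
    u ∉ q := by
  intro hu
  obtain ⟨_, _, -, hwu, -⟩ := hq.exists_split hu
  exact hacyc u (huw.trans_left hwu.reflTransGen)

theorem stmt0_general {V : Type} (E : V → V → Prop)
    (hacyc : Acyclic E) (u v : V)
    (hstrict : ∀ (r : V) (p : List V), IsRootNode E r → WalkFromTo E r v p → u ∈ p)
    (w : V) (p : List V) (hp : WalkFromTo E u v p)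
    (hw : w ∈ p) (hwu : w ≠ u) :
    StrictAnc E u w := by
  obtain ⟨_, p₂, -, hprefix, hsuffix⟩ := hp.exists_split hw
  have huw : Relation.TransGen E u w := hprefix.transGen hwu.symm
  refine ⟨huw.to_reflTransGen, fun r q hr hq => ?_⟩
  rcases List.mem_append.mp (hstrict r (q ++ p₂) hr (hq.append hsuffix)) with hq | hp₂
  · exact hq
  · exact absurd (List.mem_cons_of_mem w hp₂) (hacyc.not_mem_of_walkFromTo huw hsuffix)

/-- If `u` is a proper strict ancestor of `v` in a DAG and `w` is an
intermediate node of a path from `u` to `v`, then `u` is a strict ancestor of `w`. -/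
theorem stmt0 {V : Type} [Fintype V] (E : V → V → Prop)
    (hacyc : Acyclic E) (u v : V) (hne : u ≠ v) (hdesc : Desc E u v)
    (hstrict : ∀ (r : V) (p : List V), IsRootNode E r → WalkFromTo E r v p → u ∈ p)
    (w : V) (p : List V) (hp : WalkFromTo E u v p)
    (hw : w ∈ p) (hwu : w ≠ u) (hwv : w ≠ v) :
    StrictAnc E u w :=
  stmt0_general E hacyc u v hstrict w p hp hw hwu
end

section
/- Let N be a DAG and let u, v be nodes of N such that v is not a descendant of u. If u is a tree node (has exactly one parent) with parent u', then CSA(u,v) = CSA(u',v), where CSA(x,y) is the set of common ancestors of x and y that are strict ancestors of at least one of them. Consequently the least common semi-strict ancestor satisfies [u,v] = [u',v]. -/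
open Classical

/-!
Every node other than `u` that reaches `u` does so through its only parent `u'`, and a
root path to `u` is a root path to `u'` followed by `u`. Hence, for `x ≠ u`, being an
ancestor (resp. strict ancestor) of `u` is the same as being one of `u'`. A common
ancestor of `u` and `v` is never `u` itself, because `v` is not below `u`.
-/

section UniqueParent

variable {V : Type} {E : V → V → Prop} {u u' : V}

lemma WalkFromTo.concat {r : V} {q : List V} (hq : WalkFromTo E r u' q) (h : E u' u) :
    WalkFromTo E r u (q ++ [u]) := by
  obtain ⟨⟨-, hchain⟩, hhead, hlast⟩ := hq
  refine ⟨⟨by simp, hchain.append (.singleton u) ?_⟩, ?_, by simp⟩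
  · simpa [hlast] using h
  · simp [List.head?_append, hhead]

lemma WalkFromTo.exists_eq_concat_of_unique_parent {r : V} {p : List V}
    (hp : WalkFromTo E r u p) (hru : r ≠ u) (honly : ∀ x, E x u → x = u') :
    ∃ q, WalkFromTo E r u' q ∧ p = q ++ [u] := by
  obtain ⟨⟨hne, hchain⟩, hhead, hlast⟩ := hp
  obtain ⟨q, b, rfl⟩ := (List.eq_nil_or_concat' p).resolve_left hne
  obtain rfl : b = u := by simpa using hlast
  obtain rfl | hq := eq_or_ne q []
  · exact absurd (by simpa using hhead) hru.symm
  refine ⟨q, ⟨⟨hq, hchain.left_of_append⟩, ?_, ?_⟩, rfl⟩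
  · simpa [List.head?_append, List.head?_eq_some_head hq] using hhead
  · rw [List.getLast?_eq_some_getLast hq,
      honly _ (hchain.rel_getLast_head_of_append hq (List.cons_ne_nil _ _))]

variable (hparent : E u' u) (honly : ∀ x, E x u → x = u')
include hparent honly

lemma desc_iff_of_unique_parent {x : V} (hxu : x ≠ u) : Desc E x u ↔ Desc E x u' := by
  refine ⟨fun h => ?_, fun h => h.tail hparent⟩
  rcases h.cases_tail with rfl | ⟨c, hc, hcu⟩
  · exact absurd rfl hxu
  · rwa [honly c hcu] at hc

lemma strictAnc_iff_of_unique_parent {x : V} (hxu : x ≠ u) :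
    StrictAnc E x u ↔ StrictAnc E x u' := by
  rw [StrictAnc, StrictAnc, desc_iff_of_unique_parent hparent honly hxu]
  refine and_congr_right fun _ => ⟨fun h r q hr hq => ?_, fun h r p hr hp => ?_⟩
  · simpa [hxu] using h r _ hr (hq.concat hparent)
  · obtain ⟨q, hq, rfl⟩ :=
      hp.exists_eq_concat_of_unique_parent (fun hru => hr u' (hru ▸ hparent)) honly
    exact List.mem_append_left _ (h r q hr hq)

lemma csaSet_eq_of_unique_parent {v : V} (hnotdesc : ¬ Desc E u v) :
    CSAset E u v = CSAset E u' v := by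
  ext x
  by_cases hxv : Desc E x v
  · have hxu : x ≠ u := fun h => hnotdesc (h ▸ hxv)
    simp only [CSAset, Set.mem_ofPred_eq, desc_iff_of_unique_parent hparent honly hxu,
      strictAnc_iff_of_unique_parent hparent honly hxu]
  · simp [CSAset, hxv]

end UniqueParent

theorem stmt1_general {V : Type} (E : V → V → Prop)
    (u u' v : V) (hnotdesc : ¬ Desc E u v)
    (hparent : E u' u) (honly : ∀ x, E x u → x = u') :
    CSAset E u v = CSAset E u' v ∧ ∀ x, IsLCSA E u v x ↔ IsLCSA E u' v x := by
  have hset := csaSet_eq_of_unique_parent hparent honly hnotdesc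
  exact ⟨hset, fun x => by simp only [IsLCSA, hset]⟩

/-- If `v` is not a descendant of `u` and `u` is a tree node with (only)
parent `u'`, then `CSA(u,v) = CSA(u',v)` and hence `[u,v] = [u',v]`. -/
theorem stmt1 {V : Type} [Fintype V] (E : V → V → Prop) (hacyc : Acyclic E)
    (u u' v : V) (hnotdesc : ¬ Desc E u v)
    (hparent : E u' u) (honly : ∀ x, E x u → x = u') :
    CSAset E u v = CSAset E u' v ∧ ∀ x, IsLCSA E u v x ↔ IsLCSA E u' v x :=
  stmt1_general E u u' v hnotdesc hparent honly
end

section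
/- Let N be a quasi-binary tree-child time consistent hybridization network on taxa S. Two leaves i, j are sibling tree leaves (so the reduction R(i;j) can be applied) if, and only if, L_N(i,j) = 2 and L_N(i,k) = L_N(j,k) for every leaf k ∈ S \ {i,j}. -/
/-!
If `i` and `j` are tree leaves with common parent `p`, then `[i,j] = p`, so `L(i,j) = 2`. For
any other leaf `k`, a node other than `i` is a (strict) ancestor of `i` exactly when it is one
of `p`; so `i, k` and `p, k` have the same common semi-strict ancestors and
`L(i,k) = L(p,k) + 1 = L(j,k)`.

Conversely, `L(i,j) = 2` makes `x = [i,j]` a common parent of `i` and `j`, and as the network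
is quasi-binary and tree-child, one of them, say `j`, is a tree node. Were `i` hybrid, with a
second parent `y`, follow tree nodes from `y` down to a leaf `k`. Time consistency makes the
nodes after `y` on this path strictly later than every ancestor of `i`, so all common ancestors
of `i` or `j` with `k` lie above `y`. Hence `[i,k] = y`, whereas `[j,k]` lies above both `x`
and `y`, and `L(j,k) > L(i,k)`.
-/

open Classical

section Walks

variable {V : Type} {E : V → V → Prop} {u v c : V} {p q : List V}

lemma WalkFromTo.snoc (h : WalkFromTo E u c p) (hcv : E c v) : WalkFromTo E u v (p ++ [v]) := by
  obtain ⟨⟨hne, hch⟩, hhead, hlast⟩ := h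
  refine ⟨⟨by simp, hch.append (List.isChain_singleton v) ?_⟩, ?_, List.getLast?_concat⟩
  · intro x hx y hy
    simp only [hlast, Option.mem_def, Option.some.injEq, List.head?_cons] at hx hy
    exact hx ▸ hy ▸ hcv
  · simp [hhead]

lemma WalkFromTo.eq_or_exists_snoc (h : WalkFromTo E u v q) :
    (q = [v] ∧ u = v) ∨ ∃ p c, q = p ++ [v] ∧ WalkFromTo E u c p ∧ E c v := by
  obtain ⟨⟨hne, hch⟩, hhead, hlast⟩ := h
  obtain ⟨p, a, rfl⟩ : ∃ p a, q = p ++ [a] := by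
    rcases List.eq_nil_or_concat q with rfl | ⟨p, a, rfl⟩
    · exact absurd rfl hne
    · exact ⟨p, a, List.concat_eq_append⟩
  obtain rfl : a = v := by simpa using hlast
  obtain rfl | ⟨p, c, rfl⟩ := p.eq_nil_or_concat
  · simp_all
  · rw [List.concat_eq_append] at hch hhead ⊢
    replace hch := List.isChain_append.mp hch
    refine .inr ⟨p ++ [c], c, rfl,
      ⟨⟨by simp, hch.1⟩, by simpa using hhead, List.getLast?_concat⟩, hch.2.2 c (by simp) _ rfl⟩

lemma WalkFromTo.singleton (u : V) : WalkFromTo E u u [u] :=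
  ⟨⟨by simp, List.isChain_singleton u⟩, rfl, rfl⟩

lemma WalkFromTo.mem_last (h : WalkFromTo E u v q) : v ∈ q := List.mem_of_getLast? h.2.2

lemma WalkFromTo.nodup (hac : Acyclic E) (h : WalkFromTo E u v q) : q.Nodup := by
  have : IsTrans V (Relation.TransGen E) := ⟨fun _ _ _ => Relation.TransGen.trans⟩
  have hpw := List.isChain_iff_pairwise.mp (h.1.2.imp fun _ _ => Relation.TransGen.single)
  exact hpw.imp fun {a b} (hab : Relation.TransGen E a b) (heq : a = b) => hac b (heq ▸ hab)

end Walks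

section Distance

variable {V : Type} {E : V → V → Prop} {u v w : V} {m n : ℕ}

def HasWalkOfLength (E : V → V → Prop) (u v : V) (n : ℕ) : Prop :=
  ∃ q, WalkFromTo E u v q ∧ q.length = n + 1

lemma hasWalkOfLength_zero : HasWalkOfLength E u v 0 ↔ u = v := by
  constructor
  · rintro ⟨q, hq, hlen⟩
    rcases hq.eq_or_exists_snoc with ⟨-, huv⟩ | ⟨q, c, rfl, hq, -⟩
    · exact huv
    · simp [hq.1.1] at hlen
  · rintro rfl
    exact ⟨[u], .singleton u, rfl⟩

lemma hasWalkOfLength_succ :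
    HasWalkOfLength E u v (n + 1) ↔ ∃ c, HasWalkOfLength E u c n ∧ E c v := by
  constructor
  · rintro ⟨q, hq, hlen⟩
    rcases hq.eq_or_exists_snoc with ⟨rfl, -⟩ | ⟨q, c, rfl, hq, hcv⟩
    · simp at hlen
    · exact ⟨c, ⟨q, hq, by simpa using hlen⟩, hcv⟩
  · rintro ⟨c, ⟨q, hq, hlen⟩, hcv⟩
    exact ⟨q ++ [v], hq.snoc hcv, by simp [hlen]⟩

lemma HasWalkOfLength.trans (h₁ : HasWalkOfLength E u v m) (h₂ : HasWalkOfLength E v w n) :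
    HasWalkOfLength E u w (m + n) := by
  induction n generalizing w with
  | zero => exact (hasWalkOfLength_zero.mp h₂) ▸ h₁
  | succ n ih =>
    obtain ⟨c, hc, hcw⟩ := hasWalkOfLength_succ.mp h₂
    exact hasWalkOfLength_succ.mpr ⟨c, ih hc, hcw⟩

lemma desc_iff_exists_hasWalkOfLength : Desc E u v ↔ ∃ n, HasWalkOfLength E u v n := by
  constructor
  · intro h
    induction h with
    | refl => exact ⟨0, hasWalkOfLength_zero.mpr rfl⟩
    | tail _ hcv ih =>
      obtain ⟨n, hn⟩ := ih
      exact ⟨n + 1, hasWalkOfLength_succ.mpr ⟨_, hn, hcv⟩⟩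
  · rintro ⟨n, hn⟩
    induction n generalizing v with
    | zero => exact (hasWalkOfLength_zero.mp hn) ▸ .refl
    | succ n ih =>
      obtain ⟨c, hc, hcv⟩ := hasWalkOfLength_succ.mp hn
      exact (ih hc).tail hcv

lemma HasWalkOfLength.lt_card [Finite V] (hac : Acyclic E) (h : HasWalkOfLength E u v n) :
    n < Nat.card V := by
  have := Fintype.ofFinite V
  obtain ⟨q, hq, hlen⟩ := h
  have := (hq.nodup hac).length_le_card
  rw [Nat.card_eq_fintype_card]
  omega

lemma dist_le (h : HasWalkOfLength E u v n) : dist E u v ≤ n := Nat.sInf_le h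

lemma hasWalkOfLength_dist (h : Desc E u v) : HasWalkOfLength E u v (dist E u v) :=
  Nat.sInf_mem (desc_iff_exists_hasWalkOfLength.mp h)

lemma dist_eq_zero_iff (h : Desc E u v) : dist E u v = 0 ↔ u = v := by
  refine ⟨fun h0 => hasWalkOfLength_zero.mp (h0 ▸ hasWalkOfLength_dist h), ?_⟩
  rintro rfl
  exact Nat.le_zero.mp (dist_le (hasWalkOfLength_zero.mpr rfl))

lemma dist_eq_one_of_adj (h : E u v) (hne : u ≠ v) : dist E u v = 1 := by
  have hle : dist E u v ≤ 1 :=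
    dist_le (hasWalkOfLength_succ.mpr ⟨u, hasWalkOfLength_zero.mpr rfl, h⟩)
  have hne0 : dist E u v ≠ 0 := (dist_eq_zero_iff (.single h)).not.mpr hne
  omega

lemma adj_of_dist_eq_one (h : Desc E u v) (h1 : dist E u v = 1) : E u v := by
  obtain ⟨c, hc, hcv⟩ := hasWalkOfLength_succ.mp (h1 ▸ hasWalkOfLength_dist h)
  exact hasWalkOfLength_zero.mp hc ▸ hcv

end Distance

section Acyclic

variable {V : Type} {E : V → V → Prop} {r u v w c : V} {n : ℕ}

lemma Acyclic.ne_of_desc_of_adj (hac : Acyclic E) (h : Desc E u c) (hcv : E c v) : u ≠ v := by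
  rintro rfl
  exact hac u (.tail' h hcv)

lemma IsLeaf.eq_of_desc (hu : IsLeaf E u) (h : Desc E u v) : u = v := by
  rcases h.cases_head with rfl | ⟨c, huc, -⟩
  · rfl
  · exact absurd huc (hu c)

lemma Acyclic.swap (hac : Acyclic E) : Acyclic (Function.swap E) :=
  fun v h => hac v (Relation.transGen_swap.mp h)

lemma height_eq_sSup (v : V) :
    height E v = sSup {n | ∃ w, HasWalkOfLength E v w n ∧ IsLeaf E w} := by
  unfold height
  congr 1
  ext n
  exact ⟨fun ⟨p, w, hp, hw, hlen⟩ => ⟨w, ⟨p, hp, hlen⟩, hw⟩,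
    fun ⟨w, ⟨p, hp, hlen⟩, hw⟩ => ⟨p, w, hp, hw, hlen⟩⟩

variable [Finite V]

lemma Acyclic.wellFounded (hac : Acyclic E) : WellFounded E := by
  have : IsTrans V (Relation.TransGen E) := ⟨fun _ _ _ => .trans⟩
  have : Std.Irrefl (Relation.TransGen E) := ⟨hac⟩
  exact Subrelation.wf (fun h => Relation.TransGen.single h)
    (Finite.wellFounded_of_trans_of_irrefl _)

lemma Acyclic.exists_leaf (hac : Acyclic E) {R : V → V → Prop} (hRE : ∀ a b, R a b → E a b)
    (hR : ∀ v, ¬ IsLeaf E v → ∃ w, R v w) (v : V) :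
    ∃ k, Relation.ReflTransGen R v k ∧ IsLeaf E k := by
  induction v using hac.swap.wellFounded.induction with
  | _ v ih =>
    by_cases hv : IsLeaf E v
    · exact ⟨v, .refl, hv⟩
    · obtain ⟨w, hvw⟩ := hR v hv
      obtain ⟨k, hwk, hk⟩ := ih w (hRE v w hvw)
      exact ⟨k, .head hvw hwk, hk⟩

lemma bddAbove_walkLengths (hac : Acyclic E) (v : V) :
    BddAbove {n | ∃ w, HasWalkOfLength E v w n ∧ IsLeaf E w} :=
  ⟨Nat.card V, fun _ ⟨_, hn, _⟩ => (hn.lt_card hac).le⟩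

lemma le_height (hac : Acyclic E) (h : HasWalkOfLength E v w n) (hw : IsLeaf E w) :
    n ≤ height E v :=
  height_eq_sSup v ▸ le_csSup (bddAbove_walkLengths hac v) ⟨w, h, hw⟩

lemma exists_hasWalkOfLength_height (hac : Acyclic E) (v : V) :
    ∃ w, HasWalkOfLength E v w (height E v) ∧ IsLeaf E w := by
  obtain ⟨k, hvk, hk⟩ :=
    hac.exists_leaf (fun _ _ h => h) (fun _ h => by simpa [IsLeaf] using h) v
  obtain ⟨n, hn⟩ := desc_iff_exists_hasWalkOfLength.mp hvk
  rw [height_eq_sSup]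
  exact Nat.sSup_mem (by exact ⟨n, k, hn, hk⟩) (bddAbove_walkLengths hac v)

lemma height_lt_of_desc (hac : Acyclic E) (h : Desc E u v) (hne : u ≠ v) :
    height E v < height E u := by
  obtain ⟨w, hvw, hw⟩ := exists_hasWalkOfLength_height hac v
  have hpos : dist E u v ≠ 0 := (dist_eq_zero_iff h).not.mpr hne
  have := le_height hac ((hasWalkOfLength_dist h).trans hvw) hw
  omega

lemma IsHybNet.root_desc (hnet : IsHybNet E r) (v : V) : Desc E r v := by
  induction v using hnet.acyclic.wellFounded.induction with
  | _ v ih =>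
    by_cases hv : IsRootNode E v
    · exact hnet.uniqueRoot v hv ▸ .refl
    · obtain ⟨u, hu⟩ : ∃ u, E u v := by simpa [IsRootNode] using hv
      exact (ih u hu).tail hu

lemma IsHybNet.strictAnc_root (hnet : IsHybNet E r) (v : V) : StrictAnc E r v :=
  ⟨hnet.root_desc v, fun r' _ hr' hq => hnet.uniqueRoot r' hr' ▸ List.mem_of_mem_head? hq.2.1⟩

end Acyclic

section Degrees

variable {V : Type} {E : V → V → Prop} {v : V}

lemma isHybrid_of_not_isTreeNode (h : ¬ IsTreeNode E v) : IsHybrid E v := by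
  unfold IsTreeNode at h
  unfold IsHybrid
  omega

lemma QuasiBinary.outdeg_le_two (hqb : QuasiBinary E) (v : V) : outdeg E v ≤ 2 := by
  have := hqb v
  simp only [Set.mem_insert_iff, Set.mem_singleton_iff, Prod.ext_iff] at this
  omega

end Degrees

-- `Relation.ReflTransGen (UniqueParent E)` is reachability along tree paths.
def UniqueParent {V : Type} (E : V → V → Prop) (p v : V) : Prop :=
  E p v ∧ ∀ a, E a v → a = p

section UniqueParent

variable {V : Type} {E : V → V → Prop} {p u v w x : V}

lemma IsTreeNode.uniqueParent [Finite V] (ht : IsTreeNode E v) (hpv : E p v) :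
    UniqueParent E p v := by
  refine ⟨hpv, fun a hav => by_contra fun hne => ?_⟩
  have : ({a, p} : Set V).ncard ≤ indeg E v :=
    Set.ncard_le_ncard (by rintro z (rfl | rfl) <;> assumption) (Set.toFinite _)
  rw [Set.ncard_pair hne] at this
  exact absurd ht (by unfold IsTreeNode; omega)

lemma UniqueParent.isTreeNode (h : UniqueParent E p v) : IsTreeNode E v := by
  have : {a | E a v}.ncard ≤ ({p} : Set V).ncard :=
    Set.ncard_le_ncard (fun a ha => h.2 a ha) (Set.toFinite _)
  rwa [Set.ncard_singleton] at this

lemma UniqueParent.desc_iff (h : UniqueParent E p v) (hne : u ≠ v) :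
    Desc E u v ↔ Desc E u p := by
  refine ⟨fun huv => ?_, fun hup => hup.tail h.1⟩
  rcases Relation.ReflTransGen.cases_tail_iff E u v |>.mp huv with rfl | ⟨c, huc, hcv⟩
  · exact absurd rfl hne
  · exact h.2 c hcv ▸ huc

lemma UniqueParent.dist_eq (h : UniqueParent E p v) (huv : Desc E u v) (hne : u ≠ v) :
    dist E u v = dist E u p + 1 := by
  have hup : Desc E u p := (h.desc_iff hne).mp huv
  refine le_antisymm (dist_le (hasWalkOfLength_succ.mpr ⟨p, hasWalkOfLength_dist hup, h.1⟩)) ?_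
  obtain ⟨n, hn⟩ := Nat.exists_eq_succ_of_ne_zero ((dist_eq_zero_iff huv).not.mpr hne)
  obtain ⟨c, huc, hcv⟩ := hasWalkOfLength_succ.mp (hn ▸ hasWalkOfLength_dist huv)
  rw [hn, ← h.2 c hcv]
  exact Nat.succ_le_succ (dist_le huc)

lemma UniqueParent.strictAnc_iff (h : UniqueParent E p v) (hne : u ≠ v) :
    StrictAnc E u v ↔ StrictAnc E u p := by
  refine ⟨fun ⟨huv, hroot⟩ => ⟨(h.desc_iff hne).mp huv, fun s q hs hq => ?_⟩,
    fun ⟨hup, hroot⟩ => ⟨(h.desc_iff hne).mpr hup, fun s q hs hq => ?_⟩⟩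
  · have := hroot s _ hs (hq.snoc h.1)
    simpa [hne] using this
  · rcases hq.eq_or_exists_snoc with ⟨-, rfl⟩ | ⟨q, c, rfl, hq, hcv⟩
    · exact absurd h.1 (hs p)
    · exact List.mem_append_left _ (hroot s q hs (h.2 c hcv ▸ hq))

lemma UniqueParent.mem_CSAset_iff (h : UniqueParent E p v) (hne : x ≠ v) :
    x ∈ CSAset E v w ↔ x ∈ CSAset E p w := by
  simp only [CSAset, Set.mem_ofPred_eq, h.desc_iff hne, h.strictAnc_iff hne]

end UniqueParent

section TreeChains

variable {V : Type} {E : V → V → Prop} {y k z : V}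

lemma desc_of_reflTransGen_uniqueParent (h : Relation.ReflTransGen (UniqueParent E) y k) :
    Desc E y k :=
  Relation.ReflTransGen.mono (fun _ _ h => h.1) _ _ h

lemma strictAnc_of_reflTransGen_uniqueParent (hac : Acyclic E)
    (h : Relation.ReflTransGen (UniqueParent E) y k) : StrictAnc E y k := by
  induction h with
  | refl => exact ⟨.refl, fun _ _ _ hq => hq.mem_last⟩
  | tail hyc hck ih =>
    have hyk := hac.ne_of_desc_of_adj (desc_of_reflTransGen_uniqueParent hyc) hck.1
    exact (hck.strictAnc_iff hyk).mpr ih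

lemma dist_eq_add_of_reflTransGen_uniqueParent (hac : Acyclic E)
    (h : Relation.ReflTransGen (UniqueParent E) y k) (hz : Desc E z y) :
    dist E z k = dist E z y + dist E y k := by
  induction h with
  | refl => rw [(dist_eq_zero_iff .refl).mpr rfl, Nat.add_zero]
  | @tail c k hyc hck ih =>
    have hyc := desc_of_reflTransGen_uniqueParent hyc
    rw [hck.dist_eq ((hz.trans hyc).tail hck.1) (hac.ne_of_desc_of_adj (hz.trans hyc) hck.1),
      hck.dist_eq (hyc.tail hck.1) (hac.ne_of_desc_of_adj hyc hck.1), ih]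
    omega

lemma desc_or_transGen_of_reflTransGen_uniqueParent
    (h : Relation.ReflTransGen (UniqueParent E) y k) (hz : Desc E z k) :
    Desc E z y ∨ Relation.TransGen (UniqueParent E) y z := by
  induction h with
  | refl => exact .inl hz
  | @tail c k hyc hck ih =>
    by_cases hzk : z = k
    · exact .inr (hzk ▸ .tail' hyc hck)
    · exact ih ((hck.desc_iff hzk).mp hz)

lemma TreeChild.exists_leaf_reflTransGen_uniqueParent [Finite V] (htc : TreeChild E)
    (hac : Acyclic E) (y : V) : ∃ k, Relation.ReflTransGen (UniqueParent E) y k ∧ IsLeaf E k :=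
  hac.exists_leaf (fun _ _ h => h.1)
    (fun v hv => (htc v hv).imp fun _ ⟨hvw, hw⟩ => hw.uniqueParent hvw) y

end TreeChains

def IsTemporalRepresentation {V : Type} (E : V → V → Prop) (τ : V → ℕ) : Prop :=
  ∀ u v, E u v → (IsTreeNode E v → τ u < τ v) ∧ (IsHybrid E v → τ u = τ v)

namespace IsTemporalRepresentation

variable {V : Type} {E : V → V → Prop} {τ : V → ℕ} {u v y k z : V}

lemma le_of_desc (hτ : IsTemporalRepresentation E τ) (h : Desc E u v) : τ u ≤ τ v := by
  induction h with
  | refl => rfl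
  | @tail b c _ hbc ih =>
    by_cases hc : IsTreeNode E c
    · exact ih.trans ((hτ b c hbc).1 hc).le
    · exact ih.trans ((hτ b c hbc).2 (isHybrid_of_not_isTreeNode hc)).le

lemma lt_of_transGen_uniqueParent (hτ : IsTemporalRepresentation E τ)
    (h : Relation.TransGen (UniqueParent E) u v) : τ u < τ v := by
  induction h with
  | single h => exact (hτ _ _ h.1).1 h.isTreeNode
  | tail _ hbc ih => exact ih.trans ((hτ _ _ hbc.1).1 hbc.isTreeNode)

lemma desc_of_le (hτ : IsTemporalRepresentation E τ)
    (hyk : Relation.ReflTransGen (UniqueParent E) y k) (hzk : Desc E z k) (hτz : τ z ≤ τ y) :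
    Desc E z y :=
  (desc_or_transGen_of_reflTransGen_uniqueParent hyk hzk).resolve_right
    fun h => (hτ.lt_of_transGen_uniqueParent h).not_ge hτz

end IsTemporalRepresentation

section LCSA

variable {V : Type} {E : V → V → Prop} {r u v u' v' x y : V}

lemma CSAset_comm (u v : V) : CSAset E u v = CSAset E v u := by
  ext x
  exact ⟨fun ⟨hu, hv, h⟩ => ⟨hv, hu, h.symm⟩, fun ⟨hv, hu, h⟩ => ⟨hu, hv, h.symm⟩⟩

lemma lcsa_congr (h : CSAset E u v = CSAset E u' v') : lcsa E r u v = lcsa E r u' v' := by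
  unfold lcsa IsLCSA
  rw [h]

lemma lcsa_comm (r u v : V) : lcsa E r u v = lcsa E r v u := lcsa_congr (CSAset_comm u v)

lemma pathLen_eq (r u v : V) :
    pathLen E r u v = dist E (lcsa E r u v) u + dist E (lcsa E r u v) v := by
  rw [pathLen, ell, ell, lcsa_comm r v u]

lemma ne_of_mem_CSAset (hu : IsLeaf E u) (hvu : v ≠ u) (hx : x ∈ CSAset E u v) : x ≠ u := by
  rintro rfl
  exact hvu (hx.2.1.cases_head.resolve_right fun ⟨c, hxc, _⟩ => hu c hxc).symm

variable [Finite V]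

lemma IsHybNet.isLCSA_lcsa (hnet : IsHybNet E r) (u v : V) : IsLCSA E u v (lcsa E r u v) := by
  have hr : r ∈ CSAset E u v :=
    ⟨hnet.root_desc u, hnet.root_desc v, .inl (hnet.strictAnc_root u)⟩
  obtain ⟨x, hx, hmin⟩ :=
    (CSAset E u v).exists_min_image (height E) (Set.toFinite _) ⟨r, hr⟩
  exact Classical.epsilon_spec (p := IsLCSA E u v) ⟨x, hx, hmin⟩

lemma IsHybNet.lcsa_eq_of_forall_desc (hnet : IsHybNet E r) (hy : y ∈ CSAset E u v)
    (h : ∀ z ∈ CSAset E u v, Desc E z y) : lcsa E r u v = y := by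
  obtain ⟨hmem, hmin⟩ := hnet.isLCSA_lcsa u v
  by_contra hne
  exact (height_lt_of_desc hnet.acyclic (h _ hmem) hne).not_ge (hmin y hy)

end LCSA

section Siblings

variable {V : Type} [Finite V] {E : V → V → Prop} {τ : V → ℕ} {r i j k p x y : V}

lemma IsHybNet.pathLen_eq_succ_of_uniqueParent (hnet : IsHybNet E r) (hi : IsLeaf E i)
    (hp : UniqueParent E p i) (hki : k ≠ i) : pathLen E r i k = pathLen E r p k + 1 := by
  have hCSA : CSAset E i k = CSAset E p k := by
    ext x
    refine ⟨fun hx => (hp.mem_CSAset_iff (ne_of_mem_CSAset hi hki hx)).mp hx, fun hx => ?_⟩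
    refine (hp.mem_CSAset_iff ?_).mpr hx
    rintro rfl
    obtain rfl := hi.eq_of_desc hx.1
    exact hi _ hp.1
  have hz := (hnet.isLCSA_lcsa i k).1
  rw [pathLen_eq, pathLen_eq, ← lcsa_congr hCSA,
    hp.dist_eq hz.1 (ne_of_mem_CSAset hi hki hz)]
  omega

lemma IsHybNet.lcsa_eq_of_uniqueParent (hnet : IsHybNet E r) (hi : IsLeaf E i)
    (hp : UniqueParent E p i) (hpj : E p j) (hji : j ≠ i) : lcsa E r i j = p :=
  hnet.lcsa_eq_of_forall_desc
    ⟨.single hp.1, .single hpj,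
      .inl (strictAnc_of_reflTransGen_uniqueParent hnet.acyclic (.single hp))⟩
    fun _ hz => (hp.desc_iff (ne_of_mem_CSAset hi hji hz)).mp hz.1

lemma IsHybNet.pathLen_eq_two_of_uniqueParent (hnet : IsHybNet E r) (hi : IsLeaf E i)
    (hp : UniqueParent E p i) (hpj : E p j) (hji : j ≠ i) : pathLen E r i j = 2 := by
  rw [pathLen_eq, hnet.lcsa_eq_of_uniqueParent hi hp hpj hji,
    dist_eq_one_of_adj hp.1 (hnet.acyclic.ne_of_desc_of_adj .refl hp.1),
    dist_eq_one_of_adj hpj (hnet.acyclic.ne_of_desc_of_adj .refl hpj)]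

lemma IsHybNet.adj_lcsa_of_pathLen_eq_two (hnet : IsHybNet E r) (hi : IsLeaf E i)
    (hj : IsLeaf E j) (hij : i ≠ j) (h : pathLen E r i j = 2) :
    E (lcsa E r i j) i ∧ E (lcsa E r i j) j := by
  obtain ⟨hz, -⟩ := hnet.isLCSA_lcsa i j
  have hzi := (dist_eq_zero_iff hz.1).not.mpr (ne_of_mem_CSAset hi hij.symm hz)
  have hzj := (dist_eq_zero_iff hz.2.1).not.mpr
    (ne_of_mem_CSAset hj hij (CSAset_comm i j ▸ hz))
  rw [pathLen_eq] at h
  exact ⟨adj_of_dist_eq_one hz.1 (by omega), adj_of_dist_eq_one hz.2.1 (by omega)⟩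

lemma QuasiBinary.isTreeNode_or_isTreeNode (hqb : QuasiBinary E) (htc : TreeChild E)
    (hxi : E x i) (hxj : E x j) (hij : i ≠ j) : IsTreeNode E i ∨ IsTreeNode E j := by
  obtain ⟨w, hxw, hw⟩ := htc x fun h => h i hxi
  have hout := hqb.outdeg_le_two x
  have hchildren : ({i, j} : Set V) = {w | E x w} :=
    Set.eq_of_subset_of_ncard_le (by rintro _ (rfl | rfl) <;> assumption)
      (by rwa [Set.ncard_pair hij]) (Set.toFinite _)
  rcases (hchildren ▸ hxw : w ∈ ({i, j} : Set V)) with rfl | rfl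
  · exact .inl hw
  · exact .inr hw

lemma IsHybNet.lcsa_eq_of_reflTransGen_uniqueParent (hnet : IsHybNet E r)
    (hτ : IsTemporalRepresentation E τ) (hyi : E y i) (hτyi : τ i ≤ τ y)
    (hyk : Relation.ReflTransGen (UniqueParent E) y k) : lcsa E r i k = y :=
  hnet.lcsa_eq_of_forall_desc
    ⟨.single hyi, desc_of_reflTransGen_uniqueParent hyk,
      .inr (strictAnc_of_reflTransGen_uniqueParent hnet.acyclic hyk)⟩
    fun _ hz => hτ.desc_of_le hyk hz.2.1 ((hτ.le_of_desc hz.1).trans hτyi)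

lemma IsHybNet.pathLen_lt_of_reflTransGen_uniqueParent (hnet : IsHybNet E r)
    (hτ : IsTemporalRepresentation E τ) (hj : IsLeaf E j) (hyi : E y i)
    (hxj : UniqueParent E x j) (hyx : y ≠ x) (hτyi : τ i ≤ τ y) (hτxy : τ x ≤ τ y)
    (hyk : Relation.ReflTransGen (UniqueParent E) y k) (hkj : k ≠ j) :
    pathLen E r i k < pathLen E r j k := by
  have hac := hnet.acyclic
  obtain ⟨hz, -⟩ := hnet.isLCSA_lcsa j k
  have hzj := ne_of_mem_CSAset hj hkj hz
  have hzx : Desc E (lcsa E r j k) x := (hxj.desc_iff hzj).mp hz.1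
  have hzy : Desc E (lcsa E r j k) y := hτ.desc_of_le hyk hz.2.1 ((hτ.le_of_desc hzx).trans hτxy)
  rw [pathLen_eq, pathLen_eq, hnet.lcsa_eq_of_reflTransGen_uniqueParent hτ hyi hτyi hyk,
    dist_eq_one_of_adj hyi (hac.ne_of_desc_of_adj .refl hyi), hxj.dist_eq hz.1 hzj,
    dist_eq_add_of_reflTransGen_uniqueParent hac hyk hzy]
  by_contra hle
  have hzx' := (dist_eq_zero_iff hzx).mp (by omega)
  have hzy' := (dist_eq_zero_iff hzy).mp (by omega)
  exact hyx (hzy'.symm.trans hzx')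

lemma IsHybNet.isTreeNode_of_forall_pathLen_eq (hnet : IsHybNet E r) (htc : TreeChild E)
    (hti : TimeConsistent E) (hj : IsLeaf E j) (hxi : E x i) (hxj : E x j)
    (hjt : IsTreeNode E j)
    (hL : ∀ k, IsLeaf E k → k ≠ i → k ≠ j → pathLen E r i k = pathLen E r j k) :
    IsTreeNode E i := by
  by_contra hit
  obtain ⟨τ, hτ⟩ := hti
  replace hτ : IsTemporalRepresentation E τ := hτ
  have hac := hnet.acyclic
  replace hxj := hjt.uniqueParent hxj
  obtain ⟨y, hyi, hyx⟩ : ∃ y, E y i ∧ y ≠ x := by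
    by_contra! h
    exact hit (UniqueParent.isTreeNode ⟨hxi, h⟩)
  have hhyb := isHybrid_of_not_isTreeNode hit
  have hτx : τ x = τ i := (hτ x i hxi).2 hhyb
  have hτy : τ y = τ i := (hτ y i hyi).2 hhyb
  obtain ⟨k, hyk, hk⟩ := htc.exists_leaf_reflTransGen_uniqueParent hac y
  have hki : k ≠ i := by
    rintro rfl
    rcases hyk.cases_tail with rfl | ⟨c, -, hck⟩
    · exact hac.ne_of_desc_of_adj .refl hyi rfl
    · exact hit hck.isTreeNode
  -- Otherwise `x`, the only parent of `j`, would follow `y` on the tree path, yet `τ x = τ y`.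
  have hkj : k ≠ j := by
    rintro rfl
    rcases hyk.cases_tail with rfl | ⟨c, hyc, hck⟩
    · exact hj i hyi
    · obtain rfl := hxj.2 c hck.1
      rcases Relation.reflTransGen_iff_eq_or_transGen.mp hyc with rfl | h
      · exact hyx rfl
      · exact (hτ.lt_of_transGen_uniqueParent h).ne (hτy.trans hτx.symm)
  exact (hnet.pathLen_lt_of_reflTransGen_uniqueParent hτ hj hyi hxj hyx hτy.ge
    (hτx.trans hτy.symm).le hyk hkj).ne (hL k hk hki hkj)

end Siblings

/-- In a quasi-binary TCTC hybridization network, leaves `i, j` are sibling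
tree leaves iff `L_N(i,j) = 2` and `L_N(i,k) = L_N(j,k)` for every other leaf `k`. -/
theorem stmt9 {V : Type} [Fintype V] (E : V → V → Prop) (r : V)
    (hnet : IsHybNet E r) (hqb : QuasiBinary E)
    (htc : TreeChild E) (hti : TimeConsistent E)
    (i j : V) (hi : IsLeaf E i) (hj : IsLeaf E j) (hij : i ≠ j) :
    (IsTreeNode E i ∧ IsTreeNode E j ∧ Sibling E i j) ↔
      (pathLen E r i j = 2 ∧
        ∀ k, IsLeaf E k → k ≠ i → k ≠ j → pathLen E r i k = pathLen E r j k) := by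
  constructor
  · rintro ⟨hit, hjt, -, p, hpi, hpj⟩
    have hpi := hit.uniqueParent hpi
    have hpj := hjt.uniqueParent hpj
    refine ⟨hnet.pathLen_eq_two_of_uniqueParent hi hpi hpj.1 hij.symm, fun k _ hki hkj => ?_⟩
    rw [hnet.pathLen_eq_succ_of_uniqueParent hi hpi hki,
      hnet.pathLen_eq_succ_of_uniqueParent hj hpj hkj]
  · rintro ⟨h2, hL⟩
    obtain ⟨hzi, hzj⟩ := hnet.adj_lcsa_of_pathLen_eq_two hi hj hij h2
    have hit : IsTreeNode E i := (hqb.isTreeNode_or_isTreeNode htc hzi hzj hij).elim id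
      fun hjt => hnet.isTreeNode_of_forall_pathLen_eq htc hti hj hzi hzj hjt hL
    have hjt : IsTreeNode E j := hnet.isTreeNode_of_forall_pathLen_eq htc hti hi hzj hzi hit
      fun k hk hkj hki => (hL k hk hki hkj).symm
    exact ⟨hit, hjt, hij, _, hzi, hzj⟩
end

section
/- For any two nodes u, v of a rooted DAG N, the set CSA(u,v) of common ancestors of u and v that are strict ancestors of at least one of them is nonempty, and the element of CSA(u,v) of minimum height is unique; it is the unique element of CSA(u,v) that is a descendant of all elements of CSA(u,v). -/
open Classical

/-!
If `x` is a strict ancestor of `t` and `y` is any ancestor of `t`, then `x` lies on every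
root-to-`t` path through `y`, either above or below `y`; so `x` and `y` are comparable.
Hence `CSA(u,v)` is totally ordered by descent. It contains the root, and heights strictly
decrease along arcs, so an element of minimum height lies below every other element; by
acyclicity such a lowest element is unique.
-/

section Walks

variable {V : Type} {E : V → V → Prop} {u v w : V} {p q : List V}

lemma WalkFromTo.cons {a : V} (hau : E a u) (hp : WalkFromTo E u v p) :
    WalkFromTo E a v (a :: p) := by
  obtain ⟨⟨-, hch⟩, hh, hl⟩ := hp
  obtain ⟨t, rfl⟩ := List.head?_eq_some_iff.mp hh
  exact ⟨⟨List.cons_ne_nil _ _, List.IsChain.cons_cons hau hch⟩, rfl, by simpa using hl⟩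

lemma exists_walkFromTo_of_desc (h : Desc E u v) : ∃ p, WalkFromTo E u v p := by
  induction h using Relation.ReflTransGen.head_induction_on with
  | refl => exact ⟨[v], ⟨List.cons_ne_nil _ _, List.isChain_singleton _⟩, rfl, rfl⟩
  | head hab _ ih =>
    obtain ⟨p, hp⟩ := ih
    exact ⟨_, hp.cons hab⟩

lemma WalkFromTo.append_s17 (hp : WalkFromTo E u v p) (hq : WalkFromTo E v w q) :
    WalkFromTo E u w (p ++ q.tail) := by
  obtain ⟨⟨-, hpch⟩, hph, hpl⟩ := hp
  obtain ⟨⟨-, hqch⟩, hqh, hql⟩ := hq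
  obtain ⟨s, rfl⟩ := List.getLast?_eq_some_iff.mp hpl
  obtain ⟨t, rfl⟩ := List.head?_eq_some_iff.mp hqh
  refine ⟨⟨by simp, List.IsChain.append_overlap hpch hqch (List.cons_ne_nil v [])⟩, ?_, ?_⟩
  · simpa using hph
  · cases t <;> simpa using hql

lemma WalkFromTo.desc_of_mem (hp : WalkFromTo E u v p) {x : V} (hx : x ∈ p) :
    Desc E u x ∧ Desc E x v := by
  obtain ⟨⟨-, hch⟩, hh, hl⟩ := hp
  have hpw : p.Pairwise (Relation.ReflTransGen E) :=
    List.IsChain.pairwise (List.IsChain.imp (fun _ _ => Relation.ReflTransGen.single) hch)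
  constructor
  · obtain ⟨t, rfl⟩ := List.head?_eq_some_iff.mp hh
    rcases List.mem_cons.mp hx with rfl | hx
    · exact .refl
    · exact List.rel_of_pairwise_cons hpw hx
  · obtain ⟨s, rfl⟩ := List.getLast?_eq_some_iff.mp hl
    rcases List.mem_append.mp hx with hx | hx
    · exact List.pairwise_append.mp hpw |>.2.2 x hx v (List.mem_singleton_self v)
    · rw [List.mem_singleton.mp hx]
      exact .refl

end Walks

section Acyclic

variable {V : Type} {E : V → V → Prop}

lemma Acyclic.nodup_of_isChain (hE : Acyclic E) {l : List V} (hl : l.IsChain E) : l.Nodup := by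
  refine (List.IsChain.pairwise (hl.imp fun _ _ => Relation.TransGen.single)).imp ?_
  rintro a _ h rfl
  exact hE a h

lemma Acyclic.desc_antisymm (hE : Acyclic E) {x y : V} (hxy : Desc E x y) (hyx : Desc E y x) :
    x = y := by
  rcases Relation.reflTransGen_iff_eq_or_transGen.mp hxy with h | h
  · exact h.symm
  · exact absurd (Relation.TransGen.trans_right hyx h) (hE y)

variable [Finite V]

lemma Acyclic.exists_leaf_desc (hE : Acyclic E) (v : V) : ∃ w, Desc E v w ∧ IsLeaf E w := by
  have : Std.Irrefl (Relation.TransGen (flip E)) :=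
    ⟨fun a h => hE a (Relation.transGen_swap.mp h)⟩
  obtain ⟨w, hvw, hmin⟩ := (Finite.wellFounded_of_trans_of_irrefl
    (Relation.TransGen (flip E))).has_min {w | Desc E v w} ⟨v, .refl⟩
  exact ⟨w, hvw, fun x hwx => hmin x (Relation.ReflTransGen.tail hvw hwx) (.single hwx)⟩

lemma Acyclic.desc_of_unique_root (hE : Acyclic E) {r : V}
    (huniq : ∀ x, IsRootNode E x → x = r) (v : V) : Desc E r v := by
  have : Std.Irrefl (Relation.TransGen E) := ⟨hE⟩
  obtain ⟨a, hav, hmin⟩ := (Finite.wellFounded_of_trans_of_irrefl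
    (Relation.TransGen E)).has_min {a | Desc E a v} ⟨v, .refl⟩
  have ha : IsRootNode E a := fun x hxa => hmin x (Relation.ReflTransGen.head hxa hav) (.single hxa)
  exact huniq a ha ▸ hav

lemma Acyclic.strictAnc_of_unique_root (hE : Acyclic E) {r : V}
    (huniq : ∀ x, IsRootNode E x → x = r) (v : V) : StrictAnc E r v := by
  refine ⟨hE.desc_of_unique_root huniq v, fun r' p hr' hp => ?_⟩
  obtain ⟨t, rfl⟩ := List.head?_eq_some_iff.mp hp.2.1
  exact huniq r' hr' ▸ List.mem_cons_self

end Acyclic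

section Height

variable {V : Type} {E : V → V → Prop}

def leafWalkLengths (E : V → V → Prop) (v : V) : Set ℕ :=
  {n | ∃ p w, WalkFromTo E v w p ∧ IsLeaf E w ∧ p.length = n + 1}

lemma height_eq_sSup_leafWalkLengths (v : V) : height E v = sSup (leafWalkLengths E v) := rfl

variable [Finite V]

lemma Acyclic.bddAbove_leafWalkLengths (hE : Acyclic E) (v : V) :
    BddAbove (leafWalkLengths E v) := by
  have := Fintype.ofFinite V
  refine ⟨Fintype.card V, fun n ⟨p, _, hp, _, hlen⟩ => ?_⟩
  have := (hE.nodup_of_isChain hp.1.2).length_le_card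
  omega

lemma Acyclic.exists_walkFromTo_leaf_length_eq_height (hE : Acyclic E) (v : V) :
    ∃ p w, WalkFromTo E v w p ∧ IsLeaf E w ∧ p.length = height E v + 1 := by
  obtain ⟨w, hvw, hw⟩ := hE.exists_leaf_desc v
  obtain ⟨p, hp⟩ := exists_walkFromTo_of_desc hvw
  have hlen : 0 < p.length := List.length_pos_iff.mpr hp.1.1
  rw [height_eq_sSup_leafWalkLengths]
  exact Nat.sSup_mem (s := leafWalkLengths E v) ⟨p.length - 1, p, w, hp, hw, by omega⟩
    (hE.bddAbove_leafWalkLengths v)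

lemma Acyclic.length_le_height (hE : Acyclic E) {v w : V} {p : List V}
    (hp : WalkFromTo E v w p) (hw : IsLeaf E w) : p.length ≤ height E v + 1 := by
  have hlen : 0 < p.length := List.length_pos_iff.mpr hp.1.1
  have hmem : p.length - 1 ∈ leafWalkLengths E v := ⟨p, w, hp, hw, by omega⟩
  have := le_csSup (hE.bddAbove_leafWalkLengths v) hmem
  rw [height_eq_sSup_leafWalkLengths]
  omega

lemma Acyclic.height_lt_of_adj (hE : Acyclic E) {a b : V} (hab : E a b) :
    height E b < height E a := by
  obtain ⟨p, w, hp, hw, hlen⟩ := hE.exists_walkFromTo_leaf_length_eq_height b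
  have := hE.length_le_height (hp.cons hab) hw
  rw [List.length_cons] at this
  omega

lemma Acyclic.height_lt_of_transGen (hE : Acyclic E) {a b : V} (h : Relation.TransGen E a b) :
    height E b < height E a := by
  induction h with
  | single hab => exact hE.height_lt_of_adj hab
  | tail _ hbc ih => exact (hE.height_lt_of_adj hbc).trans ih

end Height

section CSA

variable {V : Type} {E : V → V → Prop} {r u v x y : V}

lemma StrictAnc.desc_or_desc {t : V} (hr : IsRootNode E r) (hry : Desc E r y) (hyt : Desc E y t)
    (hxt : StrictAnc E x t) : Desc E x y ∨ Desc E y x := by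
  obtain ⟨p, hp⟩ := exists_walkFromTo_of_desc hry
  obtain ⟨q, hq⟩ := exists_walkFromTo_of_desc hyt
  rcases List.mem_append.mp (hxt.2 r _ hr (hp.append_s17 hq)) with hx | hx
  · exact .inl (hp.desc_of_mem hx).2
  · exact .inr (hq.desc_of_mem (List.mem_of_mem_tail hx)).1

variable [Finite V] (hE : Acyclic E) (huniq : ∀ x, IsRootNode E x → x = r)
include hE huniq

lemma root_mem_CSAset (u v : V) : r ∈ CSAset E u v :=
  ⟨hE.desc_of_unique_root huniq u, hE.desc_of_unique_root huniq v,
    .inl (hE.strictAnc_of_unique_root huniq u)⟩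

lemma desc_or_desc_of_mem_CSAset (hr : IsRootNode E r) (hx : x ∈ CSAset E u v)
    (hy : y ∈ CSAset E u v) : Desc E x y ∨ Desc E y x := by
  obtain ⟨hyu, hyv, -⟩ := hy
  rcases hx.2.2 with hxu | hxv
  · exact hxu.desc_or_desc hr (hE.desc_of_unique_root huniq y) hyu
  · exact hxv.desc_or_desc hr (hE.desc_of_unique_root huniq y) hyv

lemma desc_of_mem_CSAset_of_height_le (hr : IsRootNode E r) (hx : x ∈ CSAset E u v)
    (hy : y ∈ CSAset E u v) (hxy : height E x ≤ height E y) : Desc E y x := by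
  rcases desc_or_desc_of_mem_CSAset hE huniq hr hx hy with hxy' | hyx
  · rcases Relation.reflTransGen_iff_eq_or_transGen.mp hxy' with rfl | htrans
    · exact .refl
    · exact absurd hxy (not_le.mpr (hE.height_lt_of_transGen htrans))
  · exact hyx

end CSA

/-- In a rooted DAG, `CSA(u,v)` is nonempty, has a unique element of
minimum height, and this element is the unique element of `CSA(u,v)` that is a descendant
of all elements of `CSA(u,v)`. -/
theorem stmt17 {V : Type} [Fintype V] (E : V → V → Prop) (r : V)
    (hacyc : Acyclic E) (hroot : IsRootNode E r) (huniq : ∀ x, IsRootNode E x → x = r)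
    (u v : V) :
    ∃ x, IsLCSA E u v x ∧ (∀ y, IsLCSA E u v y → y = x) ∧
      (∀ y ∈ CSAset E u v, Desc E y x) ∧
      ∀ z, z ∈ CSAset E u v → (∀ y ∈ CSAset E u v, Desc E y z) → z = x := by
  obtain ⟨x, hx, hmin⟩ := Set.exists_min_image (CSAset E u v) (height E) (Set.toFinite _)
    ⟨r, root_mem_CSAset hacyc huniq u v⟩
  have hdesc : ∀ y ∈ CSAset E u v, Desc E y x := fun y hy =>
    desc_of_mem_CSAset_of_height_le hacyc huniq hroot hx hy (hmin y hy)
  refine ⟨x, ⟨hx, hmin⟩, fun y hy => ?_, hdesc, fun z hz hzdesc => ?_⟩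
  · exact hacyc.desc_antisymm (hdesc y hy.1)
      (desc_of_mem_CSAset_of_height_le hacyc huniq hroot hy.1 hx (hy.2 x hx))
  · exact hacyc.desc_antisymm (hdesc z hz) (hzdesc x hx)
end
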